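/- arXiv:hep-th/0703182 — 2 statements merged into one kernel-verified Lean document; each statement's English description precedes it below -/
import Mathlib

section
/- The G-invariant sublattice of the curve representation, {(a,b) ∈ L : g₁·(a,b) = (a,b) and g₂·(a,b) = (a,b)}, is free of rank 3 and equals the ℤ-span of (f,0), (0,f) and (t,t); this realizes H⁰(ℤ₃×ℤ₃, R) ≅ ℤ³. -/
open Matrix

/-- The generator `g₁` of the ℤ₃×ℤ₃ action on the degree-2 homology lattice of the
ℤ₃×ℤ₃-symmetric dP₉ surface, in the basis (σ, f, θ₁₁, θ₂₁, θ₃₁, θ₃₂, θ₄₁, θ₄₂, μ, ν). -/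
def g1mat : Matrix (Fin 10) (Fin 10) ℤ :=
  !![0,0,0,3,0,0,0,0,-1,-1;
     0,1,0,3,0,1,0,1,-1,-1;
     0,0,1,0,0,0,0,0,0,0;
     0,0,0,-2,0,0,0,0,1,0;
     0,0,0,-2,0,-1,0,0,1,1;
     0,0,0,-1,1,-1,0,0,0,1;
     0,0,0,-2,0,0,0,-1,1,1;
     0,0,0,-1,0,0,1,-1,0,0;
     1,0,0,-3,0,0,0,0,2,1;
     0,0,0,0,0,0,0,0,0,1]

/-- The generator `g₂` of the ℤ₃×ℤ₃ action. -/
def g2mat : Matrix (Fin 10) (Fin 10) ℤ :=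
  !![0,0,3,0,0,0,0,0,-1,-1;
     0,1,3,0,1,0,0,1,-1,-1;
     0,0,-2,0,0,0,0,0,0,1;
     0,0,0,1,0,0,0,0,0,0;
     0,0,-1,0,-1,1,0,0,1,0;
     0,0,-2,0,-1,0,0,0,1,1;
     0,0,-2,0,0,0,0,-1,1,1;
     0,0,-1,0,0,0,1,-1,0,0;
     0,0,0,0,0,0,0,0,1,0;
     1,0,-3,0,0,0,0,0,1,2]

/-- The fiber class `f`. -/
def fvec : Fin 10 → ℤ := ![0,1,0,0,0,0,0,0,0,0]

/-- The class `t`, pull-back of the hyperplane class. -/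
def tvec : Fin 10 → ℤ := ![-3,-3,1,1,2,2,3,1,3,3]

/-- The ambient rank-20 lattice ℤ¹⁰ ⊕ ℤ¹⁰. -/
abbrev Wlat := (Fin 10 → ℤ) × (Fin 10 → ℤ)

/-- The linear form ℓ(x) = x₁ + x₉ + x₁₀. -/
def ell (x : Fin 10 → ℤ) : ℤ := x 0 + x 8 + x 9

/-- The diagonal action of a matrix `g` on ℤ¹⁰ ⊕ ℤ¹⁰. -/
def act (g : Matrix (Fin 10) (Fin 10) ℤ) (x : Wlat) : Wlat :=
  (g.mulVec x.1, g.mulVec x.2)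

lemma inv_fix (a : Fin 10 → ℤ) (h1 : g1mat.mulVec a = a) (h2 : g2mat.mulVec a = a) :
    a = (a 1 + 3 * a 2) • fvec + (a 2) • tvec := by
  have ha : a = ![a 0, a 1, a 2, a 3, a 4, a 5, a 6, a 7, a 8, a 9] := by
    funext i; fin_cases i <;> rfl
  rw [ha] at h1 h2
  conv_lhs => rw [ha]
  simp only [g1mat, g2mat, funext_iff, Fin.forall_fin_succ, IsEmpty.forall_iff,
    Matrix.mulVec, dotProduct, Fin.sum_univ_succ, Fin.sum_univ_zero,
    Matrix.of_apply, Matrix.cons_val_zero, Matrix.cons_val_succ, and_true] at h1 h2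
  obtain ⟨e1,e2,e3,e4,e5,e6,e7,e8,e9,e10⟩ := h1
  obtain ⟨f1,f2,f3,f4,f5,f6,f7,f8,f9,f10⟩ := h2
  simp only [fvec, tvec, funext_iff, Fin.forall_fin_succ, IsEmpty.forall_iff,
    Pi.add_apply, Pi.smul_apply, smul_eq_mul,
    Matrix.cons_val_zero, Matrix.cons_val_succ, and_true]
  omega

lemma g1_fvec : g1mat.mulVec fvec = fvec := by decide
lemma g2_fvec : g2mat.mulVec fvec = fvec := by decide
lemma g1_tvec : g1mat.mulVec tvec = tvec := by decide
lemma g2_tvec : g2mat.mulVec tvec = tvec := by decide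
lemma g1_zero : g1mat.mulVec (0 : Fin 10 → ℤ) = 0 := Matrix.mulVec_zero _
lemma g2_zero : g2mat.mulVec (0 : Fin 10 → ℤ) = 0 := Matrix.mulVec_zero _

/-- The G-invariant sublattice of the curve representation
`L = {(a,b) ∈ ℤ¹⁰ ⊕ ℤ¹⁰ : ℓ(a) = ℓ(b)}` is free of rank 3 and equals the ℤ-span of
`(f,0)`, `(0,f)` and `(t,t)`; this realizes `H⁰(ℤ₃×ℤ₃, R) ≅ ℤ³`. -/
theorem invariant_curve_classes :
    {x : Wlat | ell x.1 = ell x.2 ∧ act g1mat x = x ∧ act g2mat x = x}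
      = ↑(Submodule.span ℤ ({(fvec, 0), (0, fvec), (tvec, tvec)} : Set Wlat)) ∧
    LinearIndependent ℤ ![((fvec, 0) : Wlat), (0, fvec), (tvec, tvec)] := by
  constructor
  · apply Set.Subset.antisymm
    · rintro ⟨a, b⟩ ⟨hell, hA, hB⟩
      simp only [act, Prod.mk.injEq] at hA hB
      have ha := inv_fix a hA.1 hB.1
      have hb := inv_fix b hA.2 hB.2
      have hkey : a 2 = b 2 := by
        have h0a : a 0 = (a 1 + 3 * a 2) * 0 + a 2 * (-3) := by
          conv_lhs => rw [ha]
          rfl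
        have h8a : a 8 = (a 1 + 3 * a 2) * 0 + a 2 * 3 := by
          conv_lhs => rw [ha]
          rfl
        have h9a : a 9 = (a 1 + 3 * a 2) * 0 + a 2 * 3 := by
          conv_lhs => rw [ha]
          rfl
        have h0b : b 0 = (b 1 + 3 * b 2) * 0 + b 2 * (-3) := by
          conv_lhs => rw [hb]
          rfl
        have h8b : b 8 = (b 1 + 3 * b 2) * 0 + b 2 * 3 := by
          conv_lhs => rw [hb]
          rfl
        have h9b : b 9 = (b 1 + 3 * b 2) * 0 + b 2 * 3 := by
          conv_lhs => rw [hb]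
          rfl
        simp only [ell] at hell
        omega
      have hx : ((a, b) : Wlat)
          = (a 1 + 3 * a 2) • ((fvec, 0) : Wlat) + (b 1 + 3 * b 2) • ((0, fvec) : Wlat)
            + (a 2) • ((tvec, tvec) : Wlat) := by
        ext : 1
        · simpa using ha
        · simp only [Prod.snd_add, Prod.smul_snd, smul_zero, zero_add]
          rw [hkey]
          simpa using hb
      rw [hx]
      refine Submodule.add_mem _ (Submodule.add_mem _ ?_ ?_) ?_ <;>
        exact Submodule.smul_mem _ _ (Submodule.subset_span (by simp))
    · intro x hx
      have hsub : ∀ y ∈ ({(fvec, 0), (0, fvec), (tvec, tvec)} : Set Wlat),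
          ell y.1 = ell y.2 ∧ act g1mat y = y ∧ act g2mat y = y := by
        rintro y (rfl | rfl | rfl)
        · exact ⟨by decide, by simp [act, g1_fvec, g1_zero, Prod.ext_iff],
            by simp [act, g2_fvec, g2_zero, Prod.ext_iff]⟩
        · exact ⟨by decide, by simp [act, g1_fvec, g1_zero, Prod.ext_iff],
            by simp [act, g2_fvec, g2_zero, Prod.ext_iff]⟩
        · exact ⟨rfl, by simp [act, g1_tvec, Prod.ext_iff], by simp [act, g2_tvec, Prod.ext_iff]⟩
      refine Submodule.span_induction hsub ⟨rfl, ?_, ?_⟩ ?_ ?_ hx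
      · simp [act, Prod.ext_iff]
      · simp [act, Prod.ext_iff]
      · rintro y z _ _ ⟨hy1, hy2, hy3⟩ ⟨hz1, hz2, hz3⟩
        refine ⟨?_, ?_, ?_⟩
        · simp only [ell, Prod.fst_add, Prod.snd_add, Pi.add_apply] at *
          omega
        · have : act g1mat (y + z) = act g1mat y + act g1mat z := by
            simp [act, Matrix.mulVec_add, Prod.ext_iff]
          rw [this, hy2, hz2]
        · have : act g2mat (y + z) = act g2mat y + act g2mat z := by
            simp [act, Matrix.mulVec_add, Prod.ext_iff]
          rw [this, hy3, hz3]
      · rintro c y _ ⟨hy1, hy2, hy3⟩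
        refine ⟨?_, ?_, ?_⟩
        · simp only [ell, Prod.smul_fst, Prod.smul_snd, Pi.smul_apply, smul_eq_mul] at *
          linear_combination c * hy1
        · have : act g1mat (c • y) = c • act g1mat y := by
            simp only [act, Prod.smul_fst, Prod.smul_snd, Matrix.mulVec_smul, Prod.smul_mk]
          rw [this, hy2]
        · have : act g2mat (c • y) = c • act g2mat y := by
            simp only [act, Prod.smul_fst, Prod.smul_snd, Matrix.mulVec_smul, Prod.smul_mk]
          rw [this, hy3]
  · rw [Fintype.linearIndependent_iff]
    intro c hc
    simp only [Fin.sum_univ_three, Matrix.cons_val_zero, Matrix.cons_val_one,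
      Matrix.head_cons, Matrix.cons_val_two, Matrix.tail_cons] at hc
    have h1 := congrFun (congrArg Prod.fst hc) 2
    have h2 := congrFun (congrArg Prod.fst hc) 1
    have h3 := congrFun (congrArg Prod.snd hc) 1
    simp only [Prod.fst_add, Prod.snd_add, Prod.smul_fst, Prod.smul_snd, smul_zero,
      Pi.add_apply, Pi.smul_apply, smul_eq_mul, Pi.zero_apply, Prod.fst_zero, Prod.snd_zero,
      show fvec 2 = 0 from rfl, show tvec 2 = 1 from rfl,
      show fvec 1 = 1 from rfl, show tvec 1 = -3 from rfl] at h1 h2 h3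
    intro i
    have hc0 : c 0 = 0 := by omega
    have hc1 : c 1 = 0 := by omega
    have hc2 : c 2 = 0 := by omega
    fin_cases i <;> assumption
end

section
/- The sublattice of g₁-fixed elements of the divisor representation, {y ∈ L′ : g₁·y = y}, is free of rank 7 and equals the ℤ-span of the classes of (f,0), (t,0), (u,0), (v,0), (0,t), (0,u) and (0,v). (This is the basis φ, τ₁, υ₁, ψ₁, τ₂, υ₂, ψ₂ of the G₁-invariant divisor classes H²(X̃,ℤ)^{G₁} ≅ ℤ⁷.) -/
open Matrix

/-- The rank-19 lattice `L = {(a,b) : ℓ(a) = ℓ(b)}` realizing the curve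
representation `R = H₂(X̃,ℤ)` of ℤ₃×ℤ₃ on the curve classes of the covering
Calabi-Yau threefold `X̃`. -/
def Lsub : Submodule ℤ Wlat where
  carrier := {x | ell x.1 = ell x.2}
  add_mem' := by
    intro a b ha hb
    simp only [Set.mem_setOf_eq, ell, Prod.fst_add, Prod.snd_add, Pi.add_apply] at *
    omega
  zero_mem' := by simp [ell]
  smul_mem' := by
    intro c x hx
    simp only [Set.mem_setOf_eq, ell, Prod.smul_fst, Prod.smul_snd, Pi.smul_apply,
      smul_eq_mul] at *
    linear_combination c * hx

/-- The class `u = θ₂₁+θ₃₁+θ₄₁+3μ`. -/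
def uvec : Fin 10 → ℤ := ![0,0,0,1,1,0,1,0,3,0]

/-- The class `v = 2t+θ₁₁`. -/
def vvec : Fin 10 → ℤ := ![-6,-6,3,2,4,4,6,2,6,6]

/-- The relation submodule `ℤ·(f,−f)`. -/
def Ksub : Submodule ℤ Wlat := Submodule.span ℤ {((fvec, -fvec) : Wlat)}

/-- The rank-19 lattice `L′ = (ℤ¹⁰ ⊕ ℤ¹⁰)/ℤ·(f,−f)` realizing the divisor
representation `R^∨ = H₄(X̃,ℤ)`. -/
abbrev Lquot := Wlat ⧸ Ksub


section Aux

private theorem cons_val_five' {α : Type*} {m : ℕ} (x : α) (u : Fin (m + 5) → α) :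
    vecCons x u 5 = vecHead (vecTail (vecTail (vecTail (vecTail u)))) := rfl

private theorem cons_val_six' {α : Type*} {m : ℕ} (x : α) (u : Fin (m + 6) → α) :
    vecCons x u 6 = vecHead (vecTail (vecTail (vecTail (vecTail (vecTail u))))) := rfl

private theorem cons_val_seven' {α : Type*} {m : ℕ} (x : α) (u : Fin (m + 7) → α) :
    vecCons x u 7 =
      vecHead (vecTail (vecTail (vecTail (vecTail (vecTail (vecTail u)))))) := rfl

private theorem cons_val_eight' {α : Type*} {m : ℕ} (x : α) (u : Fin (m + 8) → α) :
    vecCons x u 8 =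
      vecHead (vecTail (vecTail (vecTail (vecTail (vecTail (vecTail (vecTail u))))))) := rfl

private theorem cons_val_nine' {α : Type*} {m : ℕ} (x : α) (u : Fin (m + 9) → α) :
    vecCons x u 9 =
      vecHead (vecTail (vecTail (vecTail (vecTail (vecTail (vecTail (vecTail
        (vecTail u)))))))) := rfl

private theorem sum_univ_ten' {β : Type*} [AddCommMonoid β] (f : Fin 10 → β) :
    ∑ i, f i = f 0 + f 1 + f 2 + f 3 + f 4 + f 5 + f 6 + f 7 + f 8 + f 9 := by
  rw [Fin.sum_univ_castSucc, Fin.sum_univ_castSucc, Fin.sum_univ_eight]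
  rfl

/-- Solving the linear system `(g₁ - 1)a = c·f` over ℤ: necessarily `c = 0` and
`a` lies in the span of `f, t, u, v`. -/
private theorem keyLem (a : Fin 10 → ℤ) (c : ℤ) (h : c • fvec = g1mat.mulVec a - a) :
    c = 0 ∧ ∃ p q r s : ℤ, a = p • fvec + q • tvec + r • uvec + s • vvec := by
  have h0 := congrFun h 0
  have h1 := congrFun h 1
  have h2 := congrFun h 2
  have h3 := congrFun h 3
  have h4 := congrFun h 4
  have h5 := congrFun h 5
  have h6 := congrFun h 6
  have h7 := congrFun h 7
  have h8 := congrFun h 8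
  have h9 := congrFun h 9
  simp only [g1mat, fvec, tvec, uvec, vvec, Matrix.mulVec, dotProduct, sum_univ_ten',
    Pi.smul_apply, Pi.sub_apply, Pi.add_apply, Pi.neg_apply, Pi.zero_apply, smul_eq_mul,
    Matrix.of_apply, Matrix.cons_val_zero, Matrix.cons_val_one, Matrix.head_cons,
    Matrix.cons_val_two, Matrix.tail_cons, Matrix.cons_val_three, Matrix.cons_val_four,
    cons_val_five', cons_val_six', cons_val_seven', cons_val_eight', cons_val_nine',
    Matrix.head_fin_const]
    at h0 h1 h2 h3 h4 h5 h6 h7 h8 h9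
  refine ⟨by omega, a 1 + 3 * a 7, -2 * a 2 + 3 * a 7, a 3 - a 7, a 2 - a 7, ?_⟩
  funext i
  fin_cases i <;>
    simp [fvec, tvec, uvec, vvec,
      cons_val_five', cons_val_six', cons_val_seven', cons_val_eight', cons_val_nine'] <;>
    omega

private def actL : Wlat →ₗ[ℤ] Wlat :=
  (Matrix.mulVecLin g1mat).prodMap (Matrix.mulVecLin g1mat)

private theorem actL_eq (x : Wlat) : actL x = act g1mat x := rfl

private theorem actL_fix : actL ((fvec, -fvec) : Wlat) = (fvec, -fvec) := by
  rw [actL_eq]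
  decide

private theorem hKle : Ksub ≤ Ksub.comap actL := by
  rw [Ksub, Submodule.span_le]
  rintro w hw
  rw [Set.mem_singleton_iff] at hw
  subst hw
  simp only [SetLike.mem_coe, Submodule.mem_comap, actL_fix]
  exact Submodule.subset_span rfl

private def aq : Lquot →ₗ[ℤ] Lquot := Submodule.mapQ Ksub Ksub actL hKle

private theorem aq_mk (x : Wlat) :
    aq (Submodule.Quotient.mk x) = Submodule.Quotient.mk (act g1mat x) := by
  unfold aq
  rw [Submodule.mapQ_apply, actL_eq]

end Aux

/-- The sublattice of `g₁`-fixed elements of the divisor representation `L′` is free of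
rank 7 and equals the ℤ-span of the classes of `(f,0)`, `(t,0)`, `(u,0)`, `(v,0)`,
`(0,t)`, `(0,u)` and `(0,v)`.  This is the basis `φ, τ₁, υ₁, ψ₁, τ₂, υ₂, ψ₂` of the
`G₁`-invariant divisor classes `H²(X̃,ℤ)^{G₁} ≅ ℤ⁷`. -/

theorem g1_invariant_divisor_classes :
    {y : Lquot | ∀ x : Wlat, Submodule.Quotient.mk x = y →
        Submodule.Quotient.mk (act g1mat x) = y}
      = ↑(Submodule.span ℤ
          ({Submodule.Quotient.mk ((fvec, 0) : Wlat),
            Submodule.Quotient.mk ((tvec, 0) : Wlat),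
            Submodule.Quotient.mk ((uvec, 0) : Wlat),
            Submodule.Quotient.mk ((vvec, 0) : Wlat),
            Submodule.Quotient.mk ((0, tvec) : Wlat),
            Submodule.Quotient.mk ((0, uvec) : Wlat),
            Submodule.Quotient.mk ((0, vvec) : Wlat)} : Set Lquot)) ∧
    LinearIndependent ℤ
      ![(Submodule.Quotient.mk ((fvec, 0) : Wlat) : Lquot),
        Submodule.Quotient.mk ((tvec, 0) : Wlat),
        Submodule.Quotient.mk ((uvec, 0) : Wlat),
        Submodule.Quotient.mk ((vvec, 0) : Wlat),
        Submodule.Quotient.mk ((0, tvec) : Wlat),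
        Submodule.Quotient.mk ((0, uvec) : Wlat),
        Submodule.Quotient.mk ((0, vvec) : Wlat)] := by
  constructor
  · ext y
    simp only [Set.mem_setOf_eq, SetLike.mem_coe]
    constructor
    · intro hy
      obtain ⟨x, rfl⟩ := Submodule.Quotient.mk_surjective Ksub y
      have h1 : act g1mat x - x ∈ Ksub := (Submodule.Quotient.eq Ksub).mp (hy x rfl)
      rw [Ksub, Submodule.mem_span_singleton] at h1
      obtain ⟨c, hc⟩ := h1
      have hc1 : c • fvec = g1mat.mulVec x.1 - x.1 := by
        simpa [act] using congrArg Prod.fst hc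
      have hc2 : (-c) • fvec = g1mat.mulVec x.2 - x.2 := by
        have h := congrArg Prod.snd hc
        simp only [act, Prod.smul_snd, Prod.snd_sub, smul_neg] at h
        rw [neg_smul]
        exact h
      obtain ⟨hc0, p1, q1, r1, s1, ha⟩ := keyLem x.1 c hc1
      obtain ⟨-, p2, q2, r2, s2, hb⟩ := keyLem x.2 (-c) hc2
      have m1 : (Submodule.Quotient.mk ((fvec, 0) : Wlat) : Lquot) ∈
          Submodule.span ℤ
            ({Submodule.Quotient.mk ((fvec, 0) : Wlat),
              Submodule.Quotient.mk ((tvec, 0) : Wlat),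
              Submodule.Quotient.mk ((uvec, 0) : Wlat),
              Submodule.Quotient.mk ((vvec, 0) : Wlat),
              Submodule.Quotient.mk ((0, tvec) : Wlat),
              Submodule.Quotient.mk ((0, uvec) : Wlat),
              Submodule.Quotient.mk ((0, vvec) : Wlat)} : Set Lquot) :=
        Submodule.subset_span (by simp)
      have m2 : (Submodule.Quotient.mk ((tvec, 0) : Wlat) : Lquot) ∈
          Submodule.span ℤ
            ({Submodule.Quotient.mk ((fvec, 0) : Wlat),
              Submodule.Quotient.mk ((tvec, 0) : Wlat),
              Submodule.Quotient.mk ((uvec, 0) : Wlat),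
              Submodule.Quotient.mk ((vvec, 0) : Wlat),
              Submodule.Quotient.mk ((0, tvec) : Wlat),
              Submodule.Quotient.mk ((0, uvec) : Wlat),
              Submodule.Quotient.mk ((0, vvec) : Wlat)} : Set Lquot) :=
        Submodule.subset_span (by simp)
      have m3 : (Submodule.Quotient.mk ((uvec, 0) : Wlat) : Lquot) ∈
          Submodule.span ℤ
            ({Submodule.Quotient.mk ((fvec, 0) : Wlat),
              Submodule.Quotient.mk ((tvec, 0) : Wlat),
              Submodule.Quotient.mk ((uvec, 0) : Wlat),
              Submodule.Quotient.mk ((vvec, 0) : Wlat),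
              Submodule.Quotient.mk ((0, tvec) : Wlat),
              Submodule.Quotient.mk ((0, uvec) : Wlat),
              Submodule.Quotient.mk ((0, vvec) : Wlat)} : Set Lquot) :=
        Submodule.subset_span (by simp)
      have m4 : (Submodule.Quotient.mk ((vvec, 0) : Wlat) : Lquot) ∈
          Submodule.span ℤ
            ({Submodule.Quotient.mk ((fvec, 0) : Wlat),
              Submodule.Quotient.mk ((tvec, 0) : Wlat),
              Submodule.Quotient.mk ((uvec, 0) : Wlat),
              Submodule.Quotient.mk ((vvec, 0) : Wlat),
              Submodule.Quotient.mk ((0, tvec) : Wlat),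
              Submodule.Quotient.mk ((0, uvec) : Wlat),
              Submodule.Quotient.mk ((0, vvec) : Wlat)} : Set Lquot) :=
        Submodule.subset_span (by simp)
      have m5 : (Submodule.Quotient.mk ((0, tvec) : Wlat) : Lquot) ∈
          Submodule.span ℤ
            ({Submodule.Quotient.mk ((fvec, 0) : Wlat),
              Submodule.Quotient.mk ((tvec, 0) : Wlat),
              Submodule.Quotient.mk ((uvec, 0) : Wlat),
              Submodule.Quotient.mk ((vvec, 0) : Wlat),
              Submodule.Quotient.mk ((0, tvec) : Wlat),
              Submodule.Quotient.mk ((0, uvec) : Wlat),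
              Submodule.Quotient.mk ((0, vvec) : Wlat)} : Set Lquot) :=
        Submodule.subset_span (by simp)
      have m6 : (Submodule.Quotient.mk ((0, uvec) : Wlat) : Lquot) ∈
          Submodule.span ℤ
            ({Submodule.Quotient.mk ((fvec, 0) : Wlat),
              Submodule.Quotient.mk ((tvec, 0) : Wlat),
              Submodule.Quotient.mk ((uvec, 0) : Wlat),
              Submodule.Quotient.mk ((vvec, 0) : Wlat),
              Submodule.Quotient.mk ((0, tvec) : Wlat),
              Submodule.Quotient.mk ((0, uvec) : Wlat),
              Submodule.Quotient.mk ((0, vvec) : Wlat)} : Set Lquot) :=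
        Submodule.subset_span (by simp)
      have m7 : (Submodule.Quotient.mk ((0, vvec) : Wlat) : Lquot) ∈
          Submodule.span ℤ
            ({Submodule.Quotient.mk ((fvec, 0) : Wlat),
              Submodule.Quotient.mk ((tvec, 0) : Wlat),
              Submodule.Quotient.mk ((uvec, 0) : Wlat),
              Submodule.Quotient.mk ((vvec, 0) : Wlat),
              Submodule.Quotient.mk ((0, tvec) : Wlat),
              Submodule.Quotient.mk ((0, uvec) : Wlat),
              Submodule.Quotient.mk ((0, vvec) : Wlat)} : Set Lquot) :=
        Submodule.subset_span (by simp)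
      have hff : (Submodule.Quotient.mk (((0 : Fin 10 → ℤ), fvec) : Wlat) : Lquot) =
          Submodule.Quotient.mk ((fvec, 0) : Wlat) := by
        refine (Submodule.Quotient.eq _).mpr ?_
        rw [Ksub]
        exact Submodule.mem_span_singleton.mpr ⟨-1, by decide⟩
      have hx : x = p1 • ((fvec, 0) : Wlat) + q1 • (tvec, 0) + r1 • (uvec, 0) +
          s1 • (vvec, 0) + p2 • ((0 : Fin 10 → ℤ), fvec) + q2 • (0, tvec) +
          r2 • (0, uvec) + s2 • (0, vvec) := by
        refine Prod.ext_iff.mpr ⟨?_, ?_⟩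
        · simpa using ha
        · simpa using hb
      rw [hx]
      simp only [Submodule.Quotient.mk_add, Submodule.Quotient.mk_smul]
      rw [hff]
      exact Submodule.add_mem _ (Submodule.add_mem _ (Submodule.add_mem _
        (Submodule.add_mem _ (Submodule.add_mem _ (Submodule.add_mem _
          (Submodule.add_mem _ (Submodule.smul_mem _ _ m1) (Submodule.smul_mem _ _ m2))
          (Submodule.smul_mem _ _ m3)) (Submodule.smul_mem _ _ m4))
          (Submodule.smul_mem _ _ m1)) (Submodule.smul_mem _ _ m5))
          (Submodule.smul_mem _ _ m6)) (Submodule.smul_mem _ _ m7)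
    · intro hy x hxmk
      have hfixw : ∀ w : Wlat, act g1mat w = w →
          aq (Submodule.Quotient.mk w) = Submodule.Quotient.mk w := by
        intro w hw
        rw [aq_mk, hw]
      have hle : Submodule.span ℤ
          ({Submodule.Quotient.mk ((fvec, 0) : Wlat),
            Submodule.Quotient.mk ((tvec, 0) : Wlat),
            Submodule.Quotient.mk ((uvec, 0) : Wlat),
            Submodule.Quotient.mk ((vvec, 0) : Wlat),
            Submodule.Quotient.mk ((0, tvec) : Wlat),
            Submodule.Quotient.mk ((0, uvec) : Wlat),
            Submodule.Quotient.mk ((0, vvec) : Wlat)} : Set Lquot) ≤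
          LinearMap.eqLocus aq LinearMap.id := by
        rw [Submodule.span_le]
        rintro z hz
        simp only [Set.mem_insert_iff, Set.mem_singleton_iff] at hz
        have hmem : ∀ w : Wlat, act g1mat w = w →
            (Submodule.Quotient.mk w : Lquot) ∈ LinearMap.eqLocus aq LinearMap.id := by
          intro w hw
          show aq _ = LinearMap.id _
          rw [hfixw w hw, LinearMap.id_apply]
        rcases hz with rfl | rfl | rfl | rfl | rfl | rfl | rfl
        · exact hmem _ (by decide)
        · exact hmem _ (by decide)
        · exact hmem _ (by decide)
        · exact hmem _ (by decide)
        · exact hmem _ (by decide)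
        · exact hmem _ (by decide)
        · exact hmem _ (by decide)
      have hyfix : aq y = y := hle hy
      rw [← hxmk] at hyfix ⊢
      rw [← aq_mk, hyfix]
  · rw [Fintype.linearIndependent_iff]
    intro g hg
    rw [Fin.sum_univ_seven] at hg
    simp only [Matrix.cons_val_zero, Matrix.cons_val_one, Matrix.head_cons,
      Matrix.cons_val_two, Matrix.tail_cons, Matrix.cons_val_three, Matrix.cons_val_four,
      cons_val_five', cons_val_six', Matrix.head_fin_const] at hg
    simp only [← Submodule.Quotient.mk_smul, ← Submodule.Quotient.mk_add] at hg
    rw [Submodule.Quotient.mk_eq_zero, Ksub, Submodule.mem_span_singleton] at hg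
    obtain ⟨c, hc⟩ := hg
    have H1 := congrArg Prod.fst hc
    have H2 := congrArg Prod.snd hc
    simp only [Prod.smul_fst, Prod.smul_snd, Prod.fst_add, Prod.snd_add, smul_neg] at H1 H2
    have e1 := congrFun H1 1
    have e2 := congrFun H1 2
    have e3 := congrFun H1 3
    have e7 := congrFun H1 7
    have f1 := congrFun H2 1
    have f2 := congrFun H2 2
    have f3 := congrFun H2 3
    have f7 := congrFun H2 7
    simp only [g1mat, fvec, tvec, uvec, vvec, Matrix.mulVec, dotProduct, sum_univ_ten',
      Pi.smul_apply, Pi.sub_apply, Pi.add_apply, Pi.neg_apply, Pi.zero_apply, smul_eq_mul,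
      Matrix.of_apply, Matrix.cons_val_zero, Matrix.cons_val_one, Matrix.head_cons,
      Matrix.cons_val_two, Matrix.tail_cons, Matrix.cons_val_three, Matrix.cons_val_four,
      cons_val_five', cons_val_six', cons_val_seven', cons_val_eight', cons_val_nine',
      Matrix.head_fin_const]
      at e1 e2 e3 e7 f1 f2 f3 f7
    have z0 : g 0 = 0 := by omega
    have z1 : g 1 = 0 := by omega
    have z2 : g 2 = 0 := by omega
    have z3 : g 3 = 0 := by omega
    have z4 : g 4 = 0 := by omega
    have z5 : g 5 = 0 := by omega
    have z6 : g 6 = 0 := by omega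
    intro i
    fin_cases i
    exacts [z0, z1, z2, z3, z4, z5, z6]
end
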